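/- arXiv:2411.07935 — 2 statements merged into one kernel-verified Lean document; each statement's English description precedes it below -/
import Mathlib

section
/- If D is a digraph with arc uv such that u has outdegree 1 and v has indegree 1, then ‖A_0(D)‖_* = ‖A_0(D − uv)‖_* + 1, i.e., deleting such an arc decreases the trace norm of the adjacency matrix by exactly 1. -/
open Matrix BigOperators

/-- Trace norm: sum of singular values (square roots of eigenvalues of `M * Mᴴ`). -/
noncomputable def traceNorm {m : Type*} [Fintype m] [DecidableEq m]
    (M : Matrix m m ℝ) : ℝ :=
  ∑ i, Real.sqrt ((Matrix.isHermitian_mul_conjTranspose_self M).eigenvalues i)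

/-- Outdegree of a vertex in a digraph. -/
def outDeg {V : Type*} [Fintype V] (G : Digraph V) [DecidableRel G.Adj] (u : V) : ℕ :=
  (Finset.univ.filter (fun w => G.Adj u w)).card

/-- Indegree of a vertex in a digraph. -/
def inDeg {V : Type*} [Fintype V] (G : Digraph V) [DecidableRel G.Adj] (u : V) : ℕ :=
  (Finset.univ.filter (fun w => G.Adj w u)).card

/-- The `A_α` matrix of a digraph: `α Δ⁺ + (1-α) A`. -/
noncomputable def Aalpha {V : Type*} [Fintype V] [DecidableEq V] (α : ℝ)
    (G : Digraph V) [DecidableRel G.Adj] : Matrix V V ℝ :=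
  α • Matrix.diagonal (fun v => (outDeg G v : ℝ)) +
    (1 - α) • Matrix.of (fun i j => if G.Adj i j then (1 : ℝ) else 0)

/-- Deleting the arc `uv` from a digraph. -/
def delArc {V : Type*} [DecidableEq V] (G : Digraph V) (u v : V) : Digraph V :=
  ⟨fun i j => G.Adj i j ∧ ¬(i = u ∧ j = v)⟩

instance {V : Type*} [DecidableEq V] (G : Digraph V) [DecidableRel G.Adj] (u v : V) :
    DecidableRel (delArc G u v).Adj :=
  fun i j => inferInstanceAs (Decidable (G.Adj i j ∧ ¬(i = u ∧ j = v)))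

/-- Deleting a vertex `u` (and all incident arcs) from a digraph. -/
def delVertex {V : Type*} (G : Digraph V) (u : V) : Digraph {w : V // w ≠ u} :=
  ⟨fun i j => G.Adj i j⟩

instance {V : Type*} (G : Digraph V) [DecidableRel G.Adj] (u : V) :
    DecidableRel (delVertex G u).Adj :=
  fun i j => inferInstanceAs (Decidable (G.Adj i j))

/-! Let `B` be the adjacency matrix of `D - uv`, so that `A = B + E_uv`. Column `v` of `B` vanishes,
hence `A Aᵀ = B Bᵀ + E_uu`, and row `u` of `B` vanishes, hence `B Bᵀ E_uu = 0`. Square roots of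
positive semidefinite matrices with vanishing product add, so `√(A Aᵀ) = √(B Bᵀ) + E_uu`; taking
traces gives the claim. -/

namespace Matrix

section Single

variable {α m n : Type*} [DecidableEq n]

lemma mul_single_eq_zero [NonUnitalNonAssocSemiring α] [Fintype m] [DecidableEq m]
    {M : Matrix n m α} {i : m} (hM : ∀ a, M a i = 0) (j : n) (c : α) : M * single i j c = 0 := by
  ext a b
  by_cases hb : b = j
  · simp [hb, hM]
  · simp [hb]

lemma mul_conjTranspose_add_single [Semiring α] [StarRing α] [Fintype n] (B : Matrix n n α)
    {u v : n} (hcol : ∀ i, B i v = 0) :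
    (B + single u v 1) * (B + single u v 1)ᴴ = B * Bᴴ + single u u 1 := by
  have hB : B * single v u 1 = 0 := mul_single_eq_zero hcol u 1
  have hB' : single u v 1 * Bᴴ = 0 := by simpa using congrArg conjTranspose hB
  simp [add_mul, mul_add, hB, hB']

end Single

open scoped MatrixOrder

section Sqrt

open scoped ComplexOrder

variable {𝕜 n : Type*} [RCLike 𝕜] [Fintype n] [DecidableEq n]

lemma cfcSqrt_mul_eq_zero_of_mul_eq_zero {P X : Matrix n n 𝕜} (hP : P.PosSemidef)
    (hPX : P * X = 0) : CFC.sqrt P * X = 0 := by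
  have hS : (CFC.sqrt P)ᴴ = CFC.sqrt P := (CFC.sqrt_nonneg P).posSemidef.1
  have hsq : CFC.sqrt P * CFC.sqrt P = P := CFC.sqrt_mul_sqrt_self P hP.nonneg
  rw [← conjTranspose_mul_self_mul_eq_zero, hS, hsq, hPX]

lemma cfcSqrt_add_of_mul_eq_zero {P Q : Matrix n n 𝕜} (hP : P.PosSemidef) (hQ : Q.PosSemidef)
    (hPQ : P * Q = 0) : CFC.sqrt (P + Q) = CFC.sqrt P + CFC.sqrt Q := by
  have hP' : (CFC.sqrt P).PosSemidef := (CFC.sqrt_nonneg P).posSemidef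
  have hQ' : (CFC.sqrt Q).PosSemidef := (CFC.sqrt_nonneg Q).posSemidef
  have hQP : Q * CFC.sqrt P = 0 := by
    simpa [hQ.1.eq, hP'.1.eq] using
      congrArg conjTranspose (cfcSqrt_mul_eq_zero_of_mul_eq_zero hP hPQ)
  have hQP' : CFC.sqrt Q * CFC.sqrt P = 0 := cfcSqrt_mul_eq_zero_of_mul_eq_zero hQ hQP
  have hPQ' : CFC.sqrt P * CFC.sqrt Q = 0 := by
    simpa [hQ'.1.eq, hP'.1.eq] using congrArg conjTranspose hQP'
  refine CFC.sqrt_unique ?_ (hP'.add hQ').nonneg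
  rw [add_mul, mul_add, mul_add, hPQ', hQP', CFC.sqrt_mul_sqrt_self P hP.nonneg,
    CFC.sqrt_mul_sqrt_self Q hQ.nonneg, add_zero, zero_add]

end Sqrt

lemma trace_cfcSqrt {n : Type*} [Fintype n] [DecidableEq n] {A : Matrix n n ℝ}
    (hA : A.PosSemidef) : (CFC.sqrt A).trace = ∑ i, √(hA.1.eigenvalues i) := by
  rw [CFC.sqrt_eq_cfc, cfc_nnreal_eq_real _ A hA.nonneg, hA.1.cfc_eq, IsHermitian.cfc,
    Unitary.conjStarAlgAut_apply, trace_mul_cycle,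
    Unitary.star_mul_self_of_mem hA.1.eigenvectorUnitary.2, one_mul, trace_diagonal]
  simp [max_eq_left (hA.eigenvalues_nonneg _)]

end Matrix

section TraceNorm

open scoped MatrixOrder

variable {n : Type*} [Fintype n] [DecidableEq n]

lemma traceNorm_eq_trace_cfcSqrt (M : Matrix n n ℝ) :
    traceNorm M = (CFC.sqrt (M * Mᴴ)).trace := by
  rw [traceNorm, trace_cfcSqrt (posSemidef_self_mul_conjTranspose M)]

lemma traceNorm_add_single {B : Matrix n n ℝ} {u v : n} (hrow : ∀ j, B u j = 0)
    (hcol : ∀ i, B i v = 0) : traceNorm (B + single u v 1) = traceNorm B + 1 := by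
  have hE : (single u u (1 : ℝ)).PosSemidef := by
    rw [← diagonal_single]
    exact posSemidef_diagonal_iff.mpr fun i => by by_cases hi : i = u <;> simp [hi]
  have hsqrtE : CFC.sqrt (single u u (1 : ℝ)) = single u u 1 :=
    CFC.sqrt_unique (by simp) hE.nonneg
  have hBE : B * Bᴴ * single u u 1 = 0 := by
    rw [Matrix.mul_assoc, mul_single_eq_zero (by simp [hrow]), Matrix.mul_zero]
  rw [traceNorm_eq_trace_cfcSqrt, traceNorm_eq_trace_cfcSqrt, mul_conjTranspose_add_single B hcol,
    cfcSqrt_add_of_mul_eq_zero (posSemidef_self_mul_conjTranspose B) hE hBE, hsqrtE, trace_add,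
    trace_single_eq_same]

end TraceNorm

section Digraph

variable {V : Type*} [Fintype V] (G : Digraph V) [DecidableRel G.Adj] {u v : V}

lemma Aalpha_zero_apply [DecidableEq V] (i j : V) :
    Aalpha 0 G i j = if G.Adj i j then 1 else 0 := by
  simp [Aalpha]

lemma eq_of_adj_of_outDeg_eq_one (huv : G.Adj u v) (hu : outDeg G u = 1) {w : V}
    (huw : G.Adj u w) : w = v :=
  Finset.card_le_one.mp hu.le w (by simpa using huw) v (by simpa using huv)

lemma eq_of_adj_of_inDeg_eq_one (huv : G.Adj u v) (hv : inDeg G v = 1) {w : V}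
    (hwv : G.Adj w v) : w = u :=
  Finset.card_le_one.mp hv.le w (by simpa using hwv) u (by simpa using huv)

variable [DecidableEq V]

lemma not_delArc_adj_of_outDeg_eq_one (huv : G.Adj u v) (hu : outDeg G u = 1) (w : V) :
    ¬(delArc G u v).Adj u w :=
  fun ⟨huw, hne⟩ => hne ⟨rfl, eq_of_adj_of_outDeg_eq_one G huv hu huw⟩

lemma not_delArc_adj_of_inDeg_eq_one (huv : G.Adj u v) (hv : inDeg G v = 1) (w : V) :
    ¬(delArc G u v).Adj w v :=
  fun ⟨hwv, hne⟩ => hne ⟨eq_of_adj_of_inDeg_eq_one G huv hv hwv, rfl⟩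

lemma Aalpha_zero_eq_delArc_add_single (huv : G.Adj u v) :
    Aalpha 0 G = Aalpha 0 (delArc G u v) + single u v 1 := by
  ext i j
  by_cases hij : i = u ∧ j = v
  · obtain ⟨rfl, rfl⟩ := hij
    simp [Aalpha_zero_apply, delArc, huv]
  · have hne : ¬(u = i ∧ v = j) := fun ⟨hi, hj⟩ => hij ⟨hi.symm, hj.symm⟩
    rw [Matrix.add_apply, single_apply_of_ne u v (1 : ℝ) i j hne, add_zero, Aalpha_zero_apply,
      Aalpha_zero_apply]
    exact if_congr (and_iff_left hij).symm rfl rfl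

end Digraph

theorem traceNorm_delArc_alpha_zero {V : Type*} [Fintype V] [DecidableEq V]
    (G : Digraph V) [DecidableRel G.Adj] (u v : V) (huv : G.Adj u v)
    (hu : outDeg G u = 1) (hv : inDeg G v = 1) :
    traceNorm (Aalpha 0 G) = traceNorm (Aalpha 0 (delArc G u v)) + 1 := by
  rw [Aalpha_zero_eq_delArc_add_single G huv]
  refine traceNorm_add_single (fun w => ?_) (fun w => ?_) <;> rw [Aalpha_zero_apply, if_neg]
  exacts [not_delArc_adj_of_outDeg_eq_one G huv hu w, not_delArc_adj_of_inDeg_eq_one G huv hv w]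
end

section
/- Let U be a unicyclic digraph on n vertices (a digraph whose underlying structure has exactly n arcs forming one cycle plus trees) and α ∈ [0,1). Then ‖A_α(U)‖_* ≤ n·√(2α² − 2α + 1), with equality if and only if α = 0 and U is the directed cycle C⃗_n. -/
open Matrix BigOperators

/-- The number of arcs of a digraph. -/
def numArcs {V : Type*} [Fintype V] (G : Digraph V) [DecidableRel G.Adj] : ℕ :=
  (Finset.univ.filter (fun p : V × V => G.Adj p.1 p.2)).card

/-- The underlying simple graph of a digraph. -/
def underlying {V : Type*} (G : Digraph V) : SimpleGraph V where
  Adj u v := u ≠ v ∧ (G.Adj u v ∨ G.Adj v u)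
  symm := ⟨fun u v ⟨h1, h2⟩ => ⟨h1.symm, h2.symm⟩⟩
  loopless := ⟨fun u h => h.1 rfl⟩

/-- A unicyclic digraph on `n` vertices: no symmetric arcs, connected underlying
graph, and exactly `n` arcs (so the underlying graph has exactly one cycle). -/
def IsUnicyclic {n : ℕ} (G : Digraph (Fin n)) [DecidableRel G.Adj] : Prop :=
  (∀ u v, G.Adj u v → ¬ G.Adj v u) ∧ (underlying G).Connected ∧ numArcs G = n


/-!
The trace norm is dual to the operator norm: `‖M‖_* = tr (O M)` for an orthogonal `O`, obtained
from an eigenbasis of `M Mᵀ` by normalising and completing the columns of `Mᵀ`. Since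
`A_α = ∑_{uv} e_u (α e_u + (1 - α) e_v)ᵀ` over the `n` arcs, `tr (O A_α)` is the sum of
`⟨α e_u + (1 - α) e_v, O e_u⟩`, each at most `√(α² + (1 - α)²)` by Cauchy–Schwarz. At equality
every column `O e_u` of a tail `u` is the normalised arc vector; orthogonality of these columns
forces in- and out-degrees at most one and `α (1 - α) = 0`, so with `n` arcs `U` is the
functional graph of a permutation, and connectedness makes it a single `n`-cycle. Conversely
`A_0` of the directed cycle is a permutation matrix, all of whose singular values are `1`.
-/

section TraceNormDuality

variable {V : Type*} [Fintype V] [DecidableEq V]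

theorem exists_orthogonal_mul_diagonal_sqrt (W : Matrix V V ℝ) (d : V → ℝ)
    (hW : Wᵀ * W = diagonal d) :
    ∃ Q : Matrix V V ℝ, Qᵀ * Q = 1 ∧ W = Q * diagonal (fun i => √(d i)) := by
  set w : V → EuclideanSpace ℝ V := fun i => WithLp.toLp 2 (Wᵀ i)
  have hw : ∀ i j, inner ℝ (w i) (w j) = if i = j then d i else 0 := by
    intro i j
    rw [← diagonal_apply, ← hW]
    simp [w, EuclideanSpace.inner_eq_star_dotProduct, Matrix.mul_apply, dotProduct, mul_comm]
  have hnorm : ∀ i, √(d i) = ‖w i‖ := fun i => by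
    rw [← Real.sqrt_sq (norm_nonneg (w i)), ← real_inner_self_eq_norm_sq, hw, if_pos rfl]
  have hs : Orthonormal ℝ ({i | w i ≠ 0}.domRestrict fun i => ‖w i‖⁻¹ • w i) := by
    refine ⟨fun ⟨i, hi⟩ => norm_smul_inv_norm hi, fun ⟨i, _⟩ ⟨j, _⟩ hij => ?_⟩
    have hij : i ≠ j := fun h => hij (Subtype.ext h)
    simp [real_inner_smul_left, real_inner_smul_right, hw, hij]
  obtain ⟨b, hb⟩ := hs.exists_orthonormalBasis_extension_of_card_eq (by simp)
  refine ⟨(EuclideanSpace.basisFun V ℝ).toBasis.toMatrix b.toBasis, ?_, ?_⟩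
  · simpa [conjTranspose_eq_transpose_of_trivial] using
      (EuclideanSpace.basisFun V ℝ).toMatrix_orthonormalBasis_conjTranspose_mul_self b
  · ext r i
    have hwi : W r i = w i r := rfl
    by_cases hi : w i = 0
    · simp [hwi, hi, hnorm]
    · have hi' : ‖w i‖ ≠ 0 := norm_ne_zero_iff.mpr hi
      simp [Module.Basis.toMatrix_apply, hb i hi, hnorm, hwi, hi', mul_right_comm _ _ ‖w i‖]

theorem exists_orthogonal_trace_mul_eq_traceNorm (M : Matrix V V ℝ) :
    ∃ O : Matrix V V ℝ, Oᵀ * O = 1 ∧ trace (O * M) = traceNorm M := by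
  have hS := isHermitian_mul_conjTranspose_self M
  have hUU : (hS.eigenvectorUnitary : Matrix V V ℝ) * (hS.eigenvectorUnitary)ᵀ = 1 := by
    simpa [star_eq_conjTranspose, conjTranspose_eq_transpose_of_trivial] using
      Unitary.coe_mul_star_self hS.eigenvectorUnitary
  have hdiag : (Mᵀ * (hS.eigenvectorUnitary : Matrix V V ℝ))ᵀ *
      (Mᵀ * (hS.eigenvectorUnitary : Matrix V V ℝ)) = diagonal hS.eigenvalues := by
    simpa [star_eq_conjTranspose, conjTranspose_eq_transpose_of_trivial, Matrix.mul_assoc]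
      using hS.conjStarAlgAut_star_eigenvectorUnitary
  generalize (hS.eigenvectorUnitary : Matrix V V ℝ) = U at hUU hdiag
  obtain ⟨Q, hQQ, hQ⟩ := exists_orthogonal_mul_diagonal_sqrt _ _ hdiag
  refine ⟨Q * Uᵀ, ?_, ?_⟩
  · rw [transpose_mul, transpose_transpose, Matrix.mul_assoc, ← Matrix.mul_assoc Qᵀ, hQQ,
      Matrix.one_mul, hUU]
  · calc trace (Q * Uᵀ * M) = trace ((Mᵀ * U)ᵀ * Q) := by
          rw [trace_mul_cycle, trace_mul_cycle, transpose_mul, transpose_transpose]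
      _ = traceNorm M := by
          rw [hQ, transpose_mul, diagonal_transpose, Matrix.mul_assoc, hQQ, Matrix.mul_one,
            trace_diagonal, traceNorm]

theorem traceNorm_eq_card_of_mul_transpose_eq_one (M : Matrix V V ℝ) (h : M * Mᵀ = 1) :
    traceNorm M = Fintype.card V := by
  cases isEmpty_or_nonempty V
  · simp [traceNorm]
  have h1 : ∀ i, (isHermitian_mul_conjTranspose_self M).eigenvalues i = 1 := fun i => by
    simpa [conjTranspose_eq_transpose_of_trivial, h, spectrum.one_eq] using
      (isHermitian_mul_conjTranspose_self M).eigenvalues_mem_spectrum_real i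
  simp only [traceNorm, h1, Real.sqrt_one, Finset.sum_const, Finset.card_univ, nsmul_eq_mul,
    mul_one]

theorem transpose_dotProduct_transpose {O : Matrix V V ℝ} (hO : Oᵀ * O = 1) (u v : V) :
    Oᵀ u ⬝ᵥ Oᵀ v = if u = v then 1 else 0 := by
  rw [← one_apply, ← hO]
  rfl

end TraceNormDuality

section CauchySchwarz

variable {V : Type*} [Fintype V] {x y : V → ℝ}

theorem sqrt_dotProduct_self_pos (hx : x ≠ 0) : 0 < √(x ⬝ᵥ x) :=
  Real.sqrt_pos.mpr <| (Finset.sum_nonneg fun i _ => mul_self_nonneg (x i)).lt_of_ne <|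
    Ne.symm (dotProduct_self_eq_zero.not.mpr hx)

theorem sqrt_smul_sub_dotProduct_self (hy : y ⬝ᵥ y = 1) :
    (√(x ⬝ᵥ x) • y - x) ⬝ᵥ (√(x ⬝ᵥ x) • y - x) = 2 * √(x ⬝ᵥ x) * (√(x ⬝ᵥ x) - x ⬝ᵥ y) := by
  have hx : √(x ⬝ᵥ x) * √(x ⬝ᵥ x) = x ⬝ᵥ x :=
    Real.mul_self_sqrt (Finset.sum_nonneg fun i _ => mul_self_nonneg (x i))
  simp only [sub_dotProduct, dotProduct_sub, smul_dotProduct, dotProduct_smul, hy, smul_eq_mul,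
    dotProduct_comm y x]
  linear_combination -hx

theorem dotProduct_le_sqrt_of_dotProduct_self_eq_one (hy : y ⬝ᵥ y = 1) :
    x ⬝ᵥ y ≤ √(x ⬝ᵥ x) := by
  rcases eq_or_ne x 0 with rfl | hx
  · simp
  have h0 : 0 ≤ (√(x ⬝ᵥ x) • y - x) ⬝ᵥ (√(x ⬝ᵥ x) • y - x) :=
    Finset.sum_nonneg fun i _ => mul_self_nonneg _
  rw [sqrt_smul_sub_dotProduct_self hy] at h0
  nlinarith [sqrt_dotProduct_self_pos hx]

theorem eq_inv_sqrt_smul_of_dotProduct_eq_sqrt (hy : y ⬝ᵥ y = 1) (hx : x ≠ 0)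
    (h : x ⬝ᵥ y = √(x ⬝ᵥ x)) : y = (√(x ⬝ᵥ x))⁻¹ • x := by
  have h0 := sqrt_smul_sub_dotProduct_self (x := x) hy
  rw [h, sub_self, mul_zero, dotProduct_self_eq_zero, sub_eq_zero] at h0
  rwa [eq_inv_smul_iff₀ (sqrt_dotProduct_self_pos hx).ne']

end CauchySchwarz

section ArcRow

variable {V : Type*} [DecidableEq V] {α c : ℝ} {u v w u' v' : V}

/-- The part of row `u` of `A_α` contributed by the arc `uv`. -/
def arcRow (α : ℝ) (u v : V) : V → ℝ := α • Pi.single u 1 + (1 - α) • Pi.single v 1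

theorem eq_of_arcRow_eq (hα : α ≠ 1) (h : arcRow α u v = arcRow α u v') : v = v' := by
  by_contra hne
  have hv : 1 - α = 0 := by simpa [arcRow, hne] using congrFun h v
  exact hα (by linarith)

theorem eq_of_adj_of_adj_left {G : Digraph V} {O : Matrix V V ℝ} (hα : α ≠ 1) (hc : c ≠ 0)
    (hcol : ∀ u v, G.Adj u v → Oᵀ u = c • arcRow α u v) (huv : G.Adj u v) (huw : G.Adj u w) :
    v = w :=
  eq_of_arcRow_eq hα (smul_right_injective _ hc ((hcol u v huv).symm.trans (hcol u w huw)))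

variable [Fintype V]

theorem arcRow_dotProduct_self (huv : u ≠ v) :
    arcRow α u v ⬝ᵥ arcRow α u v = α ^ 2 + (1 - α) ^ 2 := by
  simp [arcRow, huv, huv.symm, sq]

theorem arcRow_ne_zero (huv : u ≠ v) : arcRow α u v ≠ 0 := by
  intro h
  have := arcRow_dotProduct_self (α := α) huv
  rw [h, zero_dotProduct] at this
  nlinarith

theorem arcRow_dotProduct_eq_zero (h0 : 0 ≤ α) (h1 : α < 1) (hu : u ≠ u')
    (h : arcRow α u v ⬝ᵥ arcRow α u' v' = 0) : v ≠ v' ∧ (v = u' → α = 0) := by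
  constructor <;> rintro rfl <;> simp [arcRow, Pi.single_apply, hu] at h <;>
    split_ifs at h <;> nlinarith

variable {G : Digraph V} {O : Matrix V V ℝ}

theorem arcRow_dotProduct_transpose_le (hloop : ∀ u, ¬ G.Adj u u) (hO : Oᵀ * O = 1)
    (huv : G.Adj u v) : arcRow α u v ⬝ᵥ Oᵀ u ≤ √(α ^ 2 + (1 - α) ^ 2) := by
  have hne : u ≠ v := by rintro rfl; exact hloop u huv
  rw [← arcRow_dotProduct_self hne]
  exact dotProduct_le_sqrt_of_dotProduct_self_eq_one (by simp [transpose_dotProduct_transpose hO])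

theorem arcRow_dotProduct_eq_zero_of_adj (hO : Oᵀ * O = 1) (hc : c ≠ 0)
    (hcol : ∀ u v, G.Adj u v → Oᵀ u = c • arcRow α u v) (huv : G.Adj u v)
    (hu'v' : G.Adj u' v') (hne : u ≠ u') : arcRow α u v ⬝ᵥ arcRow α u' v' = 0 := by
  have := transpose_dotProduct_transpose hO u u'
  rw [hcol u v huv, hcol u' v' hu'v', if_neg hne, smul_dotProduct, dotProduct_smul,
    smul_eq_mul, smul_eq_mul] at this
  simpa [hc] using this

theorem eq_of_adj_of_adj_right (h0 : 0 ≤ α) (h1 : α < 1) (hO : Oᵀ * O = 1) (hc : c ≠ 0)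
    (hcol : ∀ u v, G.Adj u v → Oᵀ u = c • arcRow α u v) (huw : G.Adj u w) (hvw : G.Adj v w) :
    u = v := by
  by_contra hne
  exact (arcRow_dotProduct_eq_zero h0 h1 hne
    (arcRow_dotProduct_eq_zero_of_adj hO hc hcol huw hvw hne)).1 rfl

theorem eq_zero_of_adj_of_adj (h0 : 0 ≤ α) (h1 : α < 1) (hloop : ∀ u, ¬ G.Adj u u)
    (hO : Oᵀ * O = 1) (hc : c ≠ 0) (hcol : ∀ u v, G.Adj u v → Oᵀ u = c • arcRow α u v)
    (huv : G.Adj u v) (hvw : G.Adj v w) : α = 0 := by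
  have hne : u ≠ v := by rintro rfl; exact hloop u huv
  exact (arcRow_dotProduct_eq_zero h0 h1 hne
    (arcRow_dotProduct_eq_zero_of_adj hO hc hcol huv hvw hne)).2 rfl

end ArcRow

section Aalpha

variable {V : Type*} [Fintype V] [DecidableEq V] {α : ℝ} {G : Digraph V} [DecidableRel G.Adj]

def arcFinset (G : Digraph V) [DecidableRel G.Adj] : Finset (V × V) :=
  Finset.univ.filter fun p => G.Adj p.1 p.2

theorem trace_mul_Aalpha (O : Matrix V V ℝ) :
    trace (O * Aalpha α G) = ∑ p ∈ arcFinset G, arcRow α p.1 p.2 ⬝ᵥ Oᵀ p.1 := by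
  rw [trace_mul_comm, arcFinset, Finset.sum_filter, Fintype.sum_prod_type]
  refine Finset.sum_congr rfl fun k _ => ?_
  simp only [Aalpha, outDeg, smul_of, add_mul, Algebra.smul_mul_assoc, diag_apply,
    Matrix.add_apply, Matrix.smul_apply, Matrix.mul_apply, diagonal_apply, ite_mul, zero_mul,
    Finset.sum_ite_eq, Finset.mem_univ, ↓reduceIte, smul_eq_mul, of_apply, Pi.smul_apply, mul_ite,
    mul_one, mul_zero, ← Finset.sum_filter, arcRow, add_dotProduct, smul_dotProduct,
    single_dotProduct, transpose_apply, one_mul, Finset.sum_add_distrib, Finset.sum_const,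
    nsmul_eq_mul, add_left_inj]
  ring

theorem traceNorm_Aalpha_le (hloop : ∀ u, ¬ G.Adj u u) :
    traceNorm (Aalpha α G) ≤ numArcs G * √(α ^ 2 + (1 - α) ^ 2) := by
  obtain ⟨O, hO, htr⟩ := exists_orthogonal_trace_mul_eq_traceNorm (Aalpha α G)
  rw [← htr, trace_mul_Aalpha, ← nsmul_eq_mul]
  exact Finset.sum_le_card_nsmul _ _ _ fun p hp =>
    arcRow_dotProduct_transpose_le hloop hO (Finset.mem_filter.mp hp).2

theorem exists_orthogonal_transpose_eq_of_traceNorm_Aalpha_eq (hloop : ∀ u, ¬ G.Adj u u)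
    (h : traceNorm (Aalpha α G) = numArcs G * √(α ^ 2 + (1 - α) ^ 2)) :
    ∃ O : Matrix V V ℝ, Oᵀ * O = 1 ∧
      ∀ u v, G.Adj u v → Oᵀ u = (√(α ^ 2 + (1 - α) ^ 2))⁻¹ • arcRow α u v := by
  obtain ⟨O, hO, htr⟩ := exists_orthogonal_trace_mul_eq_traceNorm (Aalpha α G)
  have hsum : ∑ p ∈ arcFinset G, arcRow α p.1 p.2 ⬝ᵥ Oᵀ p.1 =
      ∑ _p ∈ arcFinset G, √(α ^ 2 + (1 - α) ^ 2) := by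
    rw [← trace_mul_Aalpha, htr, h, Finset.sum_const, nsmul_eq_mul]
    rfl
  have hle : ∀ p ∈ arcFinset G, arcRow α p.1 p.2 ⬝ᵥ Oᵀ p.1 ≤ √(α ^ 2 + (1 - α) ^ 2) :=
    fun p hp => arcRow_dotProduct_transpose_le hloop hO (Finset.mem_filter.mp hp).2
  refine ⟨O, hO, fun u v huv => ?_⟩
  have hne : u ≠ v := by rintro rfl; exact hloop u huv
  have heq := (Finset.sum_eq_sum_iff_of_le hle).mp hsum (u, v) (by simp [arcFinset, huv])
  rw [← arcRow_dotProduct_self hne] at heq ⊢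
  exact eq_inv_sqrt_smul_of_dotProduct_eq_sqrt (by simp [transpose_dotProduct_transpose hO])
    (arcRow_ne_zero hne) heq

theorem Aalpha_zero_eq_toMatrix {σ : Equiv.Perm V} (hσ : ∀ u v, G.Adj u v ↔ σ u = v) :
    Aalpha 0 G = σ.toPEquiv.toMatrix := by
  ext u v
  simp [Aalpha, hσ]

theorem traceNorm_Aalpha_zero {σ : Equiv.Perm V} (hσ : ∀ u v, G.Adj u v ↔ σ u = v) :
    traceNorm (Aalpha 0 G) = Fintype.card V := by
  rw [Aalpha_zero_eq_toMatrix hσ]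
  apply traceNorm_eq_card_of_mul_transpose_eq_one
  rw [← PEquiv.toMatrix_symm, ← PEquiv.toMatrix_trans, ← Equiv.toPEquiv_symm,
    ← Equiv.toPEquiv_trans, Equiv.self_trans_symm, Equiv.toPEquiv_refl, PEquiv.toMatrix_refl]

end Aalpha

section FunctionalGraph

variable {V : Type*} {G : Digraph V} {σ : Equiv.Perm V}

theorem numArcs_eq_sum_outDeg [Fintype V] [DecidableRel G.Adj] :
    numArcs G = ∑ u, outDeg G u := by
  simp only [numArcs, outDeg, Finset.card_filter, Fintype.sum_prod_type]

theorem exists_perm_adj_iff [Fintype V] [DecidableRel G.Adj]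
    (hout : ∀ u v w, G.Adj u v → G.Adj u w → v = w)
    (hin : ∀ u v w, G.Adj u w → G.Adj v w → u = v) (hcard : numArcs G = Fintype.card V) :
    ∃ σ : Equiv.Perm V, ∀ u v, G.Adj u v ↔ σ u = v := by
  have hle : ∀ u ∈ Finset.univ, outDeg G u ≤ 1 := fun u _ =>
    Finset.card_le_one.mpr fun v hv w hw =>
      hout u v w (Finset.mem_filter.mp hv).2 (Finset.mem_filter.mp hw).2
  have hone : ∀ u, outDeg G u = 1 := fun u =>
    (Finset.sum_eq_sum_iff_of_le hle).mp (by simp [← numArcs_eq_sum_outDeg, hcard]) u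
      (Finset.mem_univ u)
  have hex : ∀ u, ∃ v, G.Adj u v := fun u => by
    obtain ⟨v, hv⟩ := Finset.card_pos.mp (hone u ▸ Nat.one_pos)
    exact ⟨v, (Finset.mem_filter.mp hv).2⟩
  choose f hf using hex
  have hinj : Function.Injective f := fun u v h => hin u v (f u) (hf u) (h ▸ hf v)
  refine ⟨Equiv.ofBijective f hinj.bijective_of_finite, fun u v => ⟨hout u _ _ (hf u), ?_⟩⟩
  rintro rfl
  exact hf u

theorem sameCycle_of_reachable (hσ : ∀ u v, G.Adj u v ↔ σ u = v) {x y : V}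
    (h : (underlying G).Reachable x y) : σ.SameCycle x y := by
  rw [SimpleGraph.reachable_iff_reflTransGen] at h
  induction h with
  | refl => exact .refl _ _
  | tail _ hab ih =>
    refine ih.trans ?_
    rcases hab.2 with h | h
    · rw [← (hσ _ _).mp h]
      exact Equiv.Perm.sameCycle_apply_right.mpr (.refl _ _)
    · rw [← (hσ _ _).mp h]
      exact Equiv.Perm.sameCycle_apply_left.mpr (.refl _ _)

theorem isCycle_of_adj_iff [Fintype V] [DecidableEq V] (hloop : ∀ u, ¬ G.Adj u u)
    (hσ : ∀ u v, G.Adj u v ↔ σ u = v) (hconn : (underlying G).Connected) :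
    σ.IsCycle ∧ σ.support = Finset.univ := by
  have hfix : ∀ u, σ u ≠ u := fun u h => hloop u ((hσ u u).mpr h)
  obtain ⟨x⟩ := hconn.nonempty
  exact ⟨⟨x, hfix x, fun y _ => sameCycle_of_reachable hσ (hconn.preconnected x y)⟩,
    Finset.eq_univ_of_forall fun u => Equiv.Perm.mem_support.mpr (hfix u)⟩

end FunctionalGraph

theorem val_eq_val_add_one_mod_iff {n : ℕ} (a b : Fin n) :
    (b : ℕ) = (a + 1) % n ↔ finRotate n a = b := by
  cases n with
  | zero => exact a.elim0
  | succ m => rw [finRotate_apply, eq_comm, Fin.ext_iff, Fin.val_add, Fin.val_one',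
      Nat.add_mod_mod]

theorem exists_equiv_conj_finRotate {n : ℕ} {σ : Equiv.Perm (Fin n)} (hσ : σ.IsCycle)
    (hs : σ.support = Finset.univ) : ∃ e : Fin n ≃ Fin n, ∀ i, e (σ i) = finRotate n (e i) := by
  have h2 : 2 ≤ n := by simpa [hs] using hσ.two_le_card_support
  obtain ⟨e, he⟩ := isConj_iff.mp (hσ.isConj (isCycle_finRotate_of_le h2)
    (by rw [hs, support_finRotate_of_le h2]))
  exact ⟨e, fun i => by rw [← he]; simp⟩

theorem traceNorm_unicyclic_general {n : ℕ} (α : ℝ) (hα : α ∈ Set.Ico (0:ℝ) 1)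
    (U : Digraph (Fin n)) [DecidableRel U.Adj] (hU : IsUnicyclic U) :
    traceNorm (Aalpha α U) ≤ (n : ℝ) * Real.sqrt (2 * α ^ 2 - 2 * α + 1) ∧
      (traceNorm (Aalpha α U) = (n : ℝ) * Real.sqrt (2 * α ^ 2 - 2 * α + 1) ↔
        α = 0 ∧ ∃ e : Fin n ≃ Fin n,
          ∀ i j, U.Adj i j ↔ ((e j : ℕ) = ((e i : ℕ) + 1) % n)) := by
  obtain ⟨hasymm, hconn, harcs⟩ := hU
  have hloop : ∀ u, ¬ U.Adj u u := fun u h => hasymm u u h h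
  have hn : (n : ℝ) = numArcs U := by rw [harcs]
  rw [show 2 * α ^ 2 - 2 * α + 1 = α ^ 2 + (1 - α) ^ 2 by ring, hn]
  refine ⟨traceNorm_Aalpha_le hloop, fun h => ?_, ?_⟩
  · obtain ⟨O, hO, hcol⟩ := exists_orthogonal_transpose_eq_of_traceNorm_Aalpha_eq hloop h
    have hc : (√(α ^ 2 + (1 - α) ^ 2))⁻¹ ≠ 0 :=
      inv_ne_zero (Real.sqrt_ne_zero'.mpr (by nlinarith))
    obtain ⟨σ, hσ⟩ := exists_perm_adj_iff (fun _ _ _ => eq_of_adj_of_adj_left hα.2.ne hc hcol)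
      (fun _ _ _ => eq_of_adj_of_adj_right hα.1 hα.2 hO hc hcol) (by simpa using harcs)
    obtain ⟨x⟩ := hconn.nonempty
    refine ⟨eq_zero_of_adj_of_adj hα.1 hα.2 hloop hO hc hcol ((hσ x _).mpr rfl)
      ((hσ _ _).mpr rfl), ?_⟩
    obtain ⟨hcyc, hsupp⟩ := isCycle_of_adj_iff hloop hσ hconn
    obtain ⟨e, he⟩ := exists_equiv_conj_finRotate hcyc hsupp
    exact ⟨e, fun i j => by rw [hσ, val_eq_val_add_one_mod_iff, ← he, e.apply_eq_iff_eq]⟩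
  · rintro ⟨rfl, e, he⟩
    have hσ : ∀ i j, U.Adj i j ↔ (e.trans ((finRotate n).trans e.symm)) i = j := fun i j => by
      rw [he, val_eq_val_add_one_mod_iff]
      simp [Equiv.symm_apply_eq]
    rw [traceNorm_Aalpha_zero hσ, ← hn]
    simp

theorem traceNorm_unicyclic {n : ℕ} (hn : 1 ≤ n) (α : ℝ) (hα : α ∈ Set.Ico (0:ℝ) 1)
    (U : Digraph (Fin n)) [DecidableRel U.Adj] (hU : IsUnicyclic U) :
    traceNorm (Aalpha α U) ≤ (n : ℝ) * Real.sqrt (2 * α ^ 2 - 2 * α + 1) ∧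
      (traceNorm (Aalpha α U) = (n : ℝ) * Real.sqrt (2 * α ^ 2 - 2 * α + 1) ↔
        α = 0 ∧ ∃ e : Fin n ≃ Fin n,
          ∀ i j, U.Adj i j ↔ ((e j : ℕ) = ((e i : ℕ) + 1) % n)) :=
  traceNorm_unicyclic_general α hα U hU
end
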